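/- arXiv:math/0407352 — 5 statements merged into one kernel-verified Lean document; each statement's English description precedes it below -/
import Mathlib

section
/- Let (X, α) be a partial dynamical system and let X̃ = ⋃_{N∈ℕ} X_N ∪ X_∞ ⊆ ∏_{n∈ℕ}(X ∪ {0}) be its α-extension, where X_N consists of finite anti-orbits (x₀,...,x_N,0,...) with x_N ∉ Δ₋₁ = α(Δ₁), and X_∞ consists of infinite anti-orbits. Then the following are equivalent: (a) Δ₋₁ = α(Δ₁) is open in X; (b) X̃ is compact; (c) X₀ is compact. -/
open Set

variable {X : Type*}

/-- `pdsDom α Δ n` is the domain `Δₙ` of the `n`-th iterate of the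
partial map `α : Δ → X`. -/
def pdsDom (α : X → X) (Δ : Set X) : ℕ → Set X
  | 0 => Set.univ
  | n + 1 => Δ ∩ α ⁻¹' pdsDom α Δ n

/-- The point `0` adjoined to `X`: we realize `X ∪ {0}` as `X ⊕ Unit`,
with `0 := Sum.inr ()`. -/
abbrev pdsZero (X : Type*) : X ⊕ Unit := Sum.inr ()

/-- The set `X_∞` of infinite anti-orbits of `(X, α)`, inside the
product `∏_{n ∈ ℕ} (X ∪ {0})`. -/
def XInf (α : X → X) (Δ : Set X) : Set (ℕ → X ⊕ Unit) :=
  {p | (∀ n, ∃ x, p n = Sum.inl x ∧ x ∈ pdsDom α Δ n) ∧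
       (∀ n x, p (n + 1) = Sum.inl x → x ∈ Δ ∧ p n = Sum.inl (α x))}

/-- The set `X_N` of anti-orbits of length exactly `N`: sequences
`(x₀, …, x_N, 0, 0, …)` with `xₙ ∈ Δₙ`, `α xₙ = x_{n-1}` and `x_N ∉ α(Δ)`. -/
def XN (α : X → X) (Δ : Set X) (N : ℕ) : Set (ℕ → X ⊕ Unit) :=
  {p | (∀ n ≤ N, ∃ x, p n = Sum.inl x ∧ x ∈ pdsDom α Δ n) ∧
       (∀ n, N < n → p n = pdsZero X) ∧
       (∀ n x, p (n + 1) = Sum.inl x → x ∈ Δ ∧ p n = Sum.inl (α x)) ∧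
       (∀ x, p N = Sum.inl x → x ∉ α '' Δ)}

/-- The `α`-extension `X̃ = ⋃_N X_N ∪ X_∞` of `X`. -/
def Xtilde (α : X → X) (Δ : Set X) : Set (ℕ → X ⊕ Unit) :=
  (⋃ N, XN α Δ N) ∪ XInf α Δ

/-- The map `α̃ : (x₀, x₁, …) ↦ (α x₀, x₀, x₁, …)` on sequences. -/
def tShift (α : X → X) : (ℕ → X ⊕ Unit) → (ℕ → X ⊕ Unit) :=
  fun p n => Nat.casesOn n (Sum.map α id (p 0)) fun k => p k

/-- The backwards shift `(x₀, x₁, x₂, …) ↦ (x₁, x₂, …)`. -/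
def bShift : (ℕ → X ⊕ Unit) → (ℕ → X ⊕ Unit) := fun p n => p (n + 1)

/-- The domain `Δ̃₁ = {x̃ ∈ X̃ : x₀ ∈ Δ₁}` of `α̃`. -/
def tDelta1 (α : X → X) (Δ : Set X) : Set (ℕ → X ⊕ Unit) :=
  {p | p ∈ Xtilde α Δ ∧ ∃ x ∈ Δ, p 0 = Sum.inl x}

/-- The image `Δ̃₋₁ = {x̃ ∈ X̃ : x₁ ≠ 0}` of `α̃`. -/
def tDeltaM1 (α : X → X) (Δ : Set X) : Set (ℕ → X ⊕ Unit) :=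
  {p | p ∈ Xtilde α Δ ∧ p 1 ≠ pdsZero X}

/-- `V` is invariant under the partial map `α : Δ → X`:
`αⁿ(V ∩ Δₙ) = V ∩ Δ₋ₙ` for all `n ∈ ℕ`. -/
def PdsInvariant (α : X → X) (Δ : Set X) (V : Set X) : Prop :=
  ∀ n : ℕ, α^[n] '' (V ∩ pdsDom α Δ n) = V ∩ α^[n] '' pdsDom α Δ n

/-- The set `Fₙ = {x ∈ Δₙ : αⁿ x = x}` of `n`-periodic points. -/
def pdsFix (α : X → X) (Δ : Set X) (n : ℕ) : Set X :=
  {x | x ∈ pdsDom α Δ n ∧ α^[n] x = x}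

/-- Topological freedom of the partial map `α : Δ → X`: for every `n > 0`,
every nonempty relatively open subset of `Fₙ` contains a point `x` with
`|α⁻ᵏ(x)| > 1` for some `1 ≤ k ≤ n`. -/
def TopFree [TopologicalSpace X] (α : X → X) (Δ : Set X) : Prop :=
  ∀ n : ℕ, 0 < n → ∀ W : Set X, IsOpen W → (W ∩ pdsFix α Δ n).Nonempty →
    ∃ x ∈ W ∩ pdsFix α Δ n, ∃ k, 1 ≤ k ∧ k ≤ n ∧
      ∃ y z, y ∈ pdsDom α Δ k ∧ z ∈ pdsDom α Δ k ∧
        α^[k] y = x ∧ α^[k] z = x ∧ y ≠ z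

/-! A sequence `p` lies in `X̃` exactly when `p 0 ≠ 0` and every consecutive pair `(p n, p (n + 1))`
lies in the set `admissiblePairs α Δ` of pairs `(α x, x)` with `x ∈ Δ` and pairs `(y, 0)` with
`y ∉ α(Δ)` (`y = 0` included). When `α(Δ)` is open this set is closed (its first part is a compact image of the closed
set `Δ`), so `X̃` is closed in the compact space `∏ (X ∪ {0})`, and so is `X₀ = X̃ ∩ {x₁ = 0}`.
Conversely `x ↦ (x, 0, 0, …)` maps `X ∖ α(Δ)` onto `X₀`, with inverse the continuous map
`p ↦ p 0`, so if `X₀` is compact then `X ∖ α(Δ)` is compact, hence closed. -/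

def admissiblePairs (α : X → X) (Δ : Set X) : Set ((X ⊕ Unit) × (X ⊕ Unit)) :=
  (fun x => (Sum.inl (α x), Sum.inl x)) '' Δ ∪ (Sum.inl '' (α '' Δ))ᶜ ×ˢ {pdsZero X}

section Combinatorics

variable {α : X → X} {Δ : Set X}

theorem mem_admissiblePairs {a b : X ⊕ Unit} :
    (a, b) ∈ admissiblePairs α Δ ↔
      (∃ x ∈ Δ, b = Sum.inl x ∧ a = Sum.inl (α x)) ∨
        (b = pdsZero X ∧ ∀ x, a = Sum.inl x → x ∉ α '' Δ) := by
  simp only [admissiblePairs, mem_union, mem_image, Prod.mk.injEq, mem_prod, mem_compl_iff,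
    mem_singleton_iff]
  grind

theorem mem_pdsDom_of_step {p : ℕ → X ⊕ Unit}
    (step : ∀ n x, p (n + 1) = Sum.inl x → x ∈ Δ ∧ p n = Sum.inl (α x)) :
    ∀ n x, p n = Sum.inl x → x ∈ pdsDom α Δ n
  | 0, _, _ => mem_univ _
  | n + 1, x, hx => ⟨(step n x hx).1, mem_pdsDom_of_step step n _ (step n x hx).2⟩

theorem admissible_of_mem_Xtilde {p : ℕ → X ⊕ Unit} (hp : p ∈ Xtilde α Δ) :
    p 0 ≠ pdsZero X ∧ ∀ n, (p n, p (n + 1)) ∈ admissiblePairs α Δ := by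
  have of_inl : ∀ n x, p (n + 1) = Sum.inl x → x ∈ Δ ∧ p n = Sum.inl (α x) →
      (p n, p (n + 1)) ∈ admissiblePairs α Δ := fun n x hb ⟨hx, ha⟩ =>
    mem_admissiblePairs.2 (Or.inl ⟨x, hx, hb, ha⟩)
  rcases hp with hp | ⟨coord, step⟩
  · obtain ⟨N, coord, zero, step, last⟩ := mem_iUnion.1 hp
    refine ⟨fun h0 => by simpa [h0] using coord 0 N.zero_le, fun n => ?_⟩
    rcases lt_trichotomy n N with hn | rfl | hn
    · obtain ⟨x, hx, -⟩ := coord (n + 1) hn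
      exact of_inl n x hx (step n x hx)
    · exact mem_admissiblePairs.2 (Or.inr ⟨zero _ n.lt_succ_self, last⟩)
    · refine mem_admissiblePairs.2 (Or.inr ⟨zero _ (hn.trans n.lt_succ_self), fun x hx => ?_⟩)
      simp [zero n hn] at hx
  · refine ⟨fun h0 => by simpa [h0] using coord 0, fun n => ?_⟩
    obtain ⟨x, hx, -⟩ := coord (n + 1)
    exact of_inl n x hx (step n x hx)

theorem mem_Xtilde_of_admissible {p : ℕ → X ⊕ Unit} (h0 : p 0 ≠ pdsZero X)
    (hp : ∀ n, (p n, p (n + 1)) ∈ admissiblePairs α Δ) : p ∈ Xtilde α Δ := by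
  have step : ∀ n x, p (n + 1) = Sum.inl x → x ∈ Δ ∧ p n = Sum.inl (α x) := by
    intro n x hx
    rcases mem_admissiblePairs.1 (hp n) with ⟨y, hy, hb, ha⟩ | ⟨hb, -⟩
    · obtain rfl : x = y := Sum.inl_injective (hx.symm.trans hb)
      exact ⟨hy, ha⟩
    · simp [hx] at hb
  have coord : ∀ n, p n ≠ pdsZero X → ∃ x, p n = Sum.inl x ∧ x ∈ pdsDom α Δ n := by
    intro n hn
    cases hpn : p n with
    | inl x => exact ⟨x, rfl, mem_pdsDom_of_step step n x hpn⟩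
    | inr => exact absurd hpn hn
  have zero_succ : ∀ n, p n = pdsZero X → p (n + 1) = pdsZero X := by
    intro n hn
    cases hpn : p (n + 1) with
    | inl x => simpa [hn] using (step n x hpn).2
    | inr => rfl
  classical
  by_cases hfin : ∃ n, p n = pdsZero X
  · obtain ⟨N, hN⟩ : ∃ N, Nat.find hfin = N + 1 :=
      Nat.exists_eq_add_one.2 (Nat.pos_of_ne_zero fun h => h0 (h ▸ Nat.find_spec hfin))
    have zero : ∀ n, N < n → p n = pdsZero X := fun n hn => by
      induction n, hn using Nat.le_induction with
      | base => simpa [hN] using Nat.find_spec hfin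
      | succ n _ ih => exact zero_succ n ih
    refine Or.inl (mem_iUnion.2 ⟨N, fun n hn => coord n (Nat.find_min hfin (by omega)), zero, step,
      fun x hx => ?_⟩)
    rcases mem_admissiblePairs.1 (hp N) with ⟨y, -, hb, -⟩ | ⟨-, last⟩
    · simp [zero _ N.lt_succ_self] at hb
    · exact last x hx
  · push Not at hfin
    exact Or.inr ⟨fun n => coord n (hfin n), step⟩

theorem Xtilde_eq_admissible (α : X → X) (Δ : Set X) :
    Xtilde α Δ =
      {p | p 0 ≠ pdsZero X} ∩ ⋂ n, (fun p => (p n, p (n + 1))) ⁻¹' admissiblePairs α Δ := by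
  ext p
  simp only [mem_inter_iff, mem_iInter, mem_preimage, mem_ofPred_eq]
  exact ⟨admissible_of_mem_Xtilde, fun h => mem_Xtilde_of_admissible h.1 h.2⟩

theorem XN_zero_eq_inter (α : X → X) (Δ : Set X) :
    XN α Δ 0 = Xtilde α Δ ∩ {p | p 1 = pdsZero X} := by
  ext p
  refine ⟨fun hp => ⟨Or.inl (mem_iUnion.2 ⟨0, hp⟩), hp.2.1 1 one_pos⟩, ?_⟩
  rintro ⟨hp | hp, h1⟩
  · obtain ⟨N, hN⟩ := mem_iUnion.1 hp
    rcases N.eq_zero_or_pos with rfl | hpos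
    · exact hN
    · obtain ⟨x, hx, -⟩ := hN.1 1 hpos
      simp [hx] at h1
  · obtain ⟨x, hx, -⟩ := hp.1 1
    simp [hx] at h1

theorem image_eval_zero_XN_zero (α : X → X) (Δ : Set X) :
    (fun p => p 0) '' XN α Δ 0 = Sum.inl '' (α '' Δ)ᶜ := by
  ext y
  constructor
  · rintro ⟨p, ⟨coord, -, -, last⟩, rfl⟩
    obtain ⟨x, hx, -⟩ := coord 0 le_rfl
    exact ⟨x, last x hx, hx.symm⟩
  · rintro ⟨x, hx, rfl⟩
    refine ⟨fun n => if n = 0 then Sum.inl x else pdsZero X, ⟨fun n hn => ?_, fun n hn => ?_,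
      fun n y hy => by simp at hy, fun y hy => ?_⟩, rfl⟩
    · obtain rfl := Nat.le_zero.1 hn
      exact ⟨x, rfl, mem_univ x⟩
    · simp [hn.ne']
    · obtain rfl : x = y := by simpa using hy
      exact hx

end Combinatorics

section Topology

variable [TopologicalSpace X] {α : X → X} {Δ : Set X}

theorem isClosed_admissiblePairs [CompactSpace X] [T2Space X] (hΔ : IsClosed Δ)
    (hα : ContinuousOn α Δ) (hopen : IsOpen (α '' Δ)) : IsClosed (admissiblePairs α Δ) := by
  have hgraph : IsCompact ((fun x => ((Sum.inl (α x) : X ⊕ Unit), (Sum.inl x : X ⊕ Unit))) '' Δ) :=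
    hΔ.isCompact.image_of_continuousOn
      ((continuous_inl.comp_continuousOn hα).prodMk continuous_inl.continuousOn)
  exact hgraph.isClosed.union ((isOpenMap_inl _ hopen).isClosed_compl.prod isClosed_singleton)

theorem isClosed_Xtilde [CompactSpace X] [T2Space X] (hΔ : IsClosed Δ) (hα : ContinuousOn α Δ)
    (hopen : IsOpen (α '' Δ)) : IsClosed (Xtilde α Δ) := by
  have hzero : IsOpen ({pdsZero X} : Set (X ⊕ Unit)) := by
    simpa using isOpenMap_inr {()} (isOpen_discrete _)
  rw [Xtilde_eq_admissible]
  exact (hzero.isClosed_compl.preimage (continuous_apply 0)).inter <| isClosed_iInter fun n =>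
    (isClosed_admissiblePairs hΔ hα hopen).preimage
      ((continuous_apply n).prodMk (continuous_apply (n + 1)))

theorem isOpen_image_of_isCompact_XN_zero [T2Space X] (h : IsCompact (XN α Δ 0)) :
    IsOpen (α '' Δ) := by
  have himage : IsCompact (Sum.inl '' (α '' Δ)ᶜ : Set (X ⊕ Unit)) :=
    image_eval_zero_XN_zero α Δ ▸ h.image (continuous_apply 0)
  exact isClosed_compl_iff.1 (Topology.IsEmbedding.inl.isCompact_iff.2 himage).isClosed

end Topology

/-- `Δ₋₁ = α(Δ₁)` is open iff `X̃` is compact iff `X₀` is compact. -/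
theorem Xtilde_compact_iff {X : Type*} [TopologicalSpace X] [CompactSpace X] [T2Space X]
    (Δ : Set X) (hΔ : IsClopen Δ) (α : X → X) (hα : ContinuousOn α Δ) :
    (IsOpen (α '' Δ) ↔ IsCompact (Xtilde α Δ)) ∧
    (IsOpen (α '' Δ) ↔ IsCompact (XN α Δ 0)) := by
  have a_b : IsOpen (α '' Δ) → IsCompact (Xtilde α Δ) := fun h =>
    (isClosed_Xtilde hΔ.isClosed hα h).isCompact
  have b_c : IsCompact (Xtilde α Δ) → IsCompact (XN α Δ 0) := fun h => by
    rw [XN_zero_eq_inter]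
    exact h.inter_right (isClosed_eq (continuous_apply 1) continuous_const)
  have c_a : IsCompact (XN α Δ 0) → IsOpen (α '' Δ) := isOpen_image_of_isCompact_XN_zero
  exact ⟨⟨a_b, c_a ∘ b_c⟩, ⟨b_c ∘ a_b, c_a⟩⟩
end

section
/- Let (X, α) be a partial dynamical system. For each N ∈ ℕ the set X_N of anti-orbits of length exactly N is a clopen subset of the α-extension X̃. -/
open Set

variable {X : Type*}

/-- Each set `X_N` of anti-orbits of length exactly `N` is clopen in the
`α`-extension `X̃` (with its subspace topology). -/
theorem XN_isClopen_in_Xtilde {X : Type*} [TopologicalSpace X] [CompactSpace X]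
    [T2Space X] (Δ : Set X) (hΔ : IsClopen Δ) (α : X → X) (hα : ContinuousOn α Δ)
    (N : ℕ) :
    IsClopen (Subtype.val ⁻¹' XN α Δ N : Set ↥(Xtilde α Δ)) := by
  have key : ∀ p ∈ Xtilde α Δ,
      (p ∈ XN α Δ N ↔ p N ≠ pdsZero X ∧ p (N + 1) = pdsZero X) := by
    intro p hp
    constructor
    · rintro ⟨h1, h2, -, -⟩
      obtain ⟨x, hx, -⟩ := h1 N le_rfl
      exact ⟨by simp [hx, pdsZero], h2 (N + 1) (Nat.lt_succ_self N)⟩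
    · rintro ⟨hN, hN1⟩
      rcases hp with hp | hp
      · obtain ⟨M, h1, h2, h3, h4⟩ := Set.mem_iUnion.mp hp
        have hNM : N ≤ M := by
          by_contra h
          exact hN (h2 N (Nat.lt_of_not_le h))
        have hMN : M ≤ N := by
          by_contra h
          obtain ⟨x, hx, -⟩ := h1 (N + 1) (Nat.lt_of_not_le h)
          simp [hx, pdsZero] at hN1
        have : M = N := le_antisymm hMN hNM
        subst this
        exact ⟨h1, h2, h3, h4⟩
      · obtain ⟨x, hx, -⟩ := hp.1 (N + 1)
        simp [hx, pdsZero] at hN1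
  have hz : IsClopen ({pdsZero X} : Set (X ⊕ Unit)) := by
    have h : ({pdsZero X} : Set (X ⊕ Unit)) = Set.range Sum.inr := by
      ext z; cases z <;> simp [pdsZero]
    rw [h]; exact isClopen_range_inr
  have hset : (Subtype.val ⁻¹' XN α Δ N : Set ↥(Xtilde α Δ)) =
      ((fun q : ↥(Xtilde α Δ) => (q : ℕ → X ⊕ Unit) N) ⁻¹' {pdsZero X}ᶜ) ∩
      ((fun q : ↥(Xtilde α Δ) => (q : ℕ → X ⊕ Unit) (N + 1)) ⁻¹' {pdsZero X}) := by
    ext ⟨p, hp⟩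
    simpa using key p hp
  rw [hset]
  have c1 : Continuous fun q : ↥(Xtilde α Δ) => (q : ℕ → X ⊕ Unit) N :=
    (continuous_apply N).comp continuous_subtype_val
  have c2 : Continuous fun q : ↥(Xtilde α Δ) => (q : ℕ → X ⊕ Unit) (N + 1) :=
    (continuous_apply (N + 1)).comp continuous_subtype_val
  exact IsClopen.inter (hz.compl.preimage c1) (hz.preimage c2)
end

section
/- Let (X, α) be a partial dynamical system with Δ₋₁ open. The map α̃ : Δ̃₁ → Δ̃₋₁ defined by α̃(x₀, x₁, ...) = (α(x₀), x₀, x₁, ...) is a homeomorphism from Δ̃₁ = {(x₀,...) ∈ X̃ : x₀ ∈ Δ₁} onto Δ̃₋₁ = {(x₀, x₁, ...) ∈ X̃ : x₁ ≠ 0}, with inverse α̃⁻¹(x₀, x₁, x₂, ...) = (x₁, x₂, ...). Moreover Φ ∘ α̃ = α ∘ Φ on Δ̃₁. -/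
open Set

variable {X : Type*}

open Set

/-!
The backward shift undoes `α̃` on every sequence. Conversely `α̃` undoes the backward shift on
every anti-orbit `(x₀, x₁, …)` with `x₁ ≠ 0`, because the anti-orbit relation forces
`x₀ = α x₁`. Shifting forwards or backwards preserves anti-orbits, trading `X_N` for `X_{N+1}`
and `X_∞` for itself, so the two shifts are mutually inverse between `Δ̃₁` and `Δ̃₋₁`. Both are
continuous coordinatewise: every coordinate is a projection, except the zeroth coordinate of
`α̃`, which is `α` applied to `x₀ ∈ Δ`.
-/

variable {α : X → X} {Δ : Set X} {p : ℕ → X ⊕ Unit}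

/-- The compatibility condition shared by `X_N` and `X_∞`. -/
def IsAntiOrbit (α : X → X) (Δ : Set X) (p : ℕ → X ⊕ Unit) : Prop :=
  ∀ n x, p (n + 1) = Sum.inl x → x ∈ Δ ∧ p n = Sum.inl (α x)

lemma pdsDom_succ_subset (α : X → X) (Δ : Set X) : ∀ n, pdsDom α Δ (n + 1) ⊆ pdsDom α Δ n
  | 0 => fun x _ => mem_univ x
  | n + 1 => fun _ hx => ⟨hx.1, pdsDom_succ_subset α Δ n hx.2⟩

@[simp]
lemma tShift_zero (p : ℕ → X ⊕ Unit) : tShift α p 0 = Sum.map α id (p 0) := rfl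

@[simp]
lemma tShift_succ (p : ℕ → X ⊕ Unit) (n : ℕ) : tShift α p (n + 1) = p n := rfl

@[simp]
lemma bShift_apply (p : ℕ → X ⊕ Unit) (n : ℕ) : bShift p n = p (n + 1) := rfl

lemma bShift_tShift (p : ℕ → X ⊕ Unit) : bShift (tShift α p) = p := rfl

namespace IsAntiOrbit

lemma mem_pdsDom_succ (hp : IsAntiOrbit α Δ p) {x₀ : X} (h₀ : p 0 = Sum.inl x₀)
    (hx₀ : x₀ ∈ Δ) : ∀ n y, p n = Sum.inl y → y ∈ pdsDom α Δ (n + 1)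
  | 0, y, hy => by
    obtain rfl : y = x₀ := Sum.inl_injective (hy.symm.trans h₀)
    exact ⟨hx₀, mem_univ _⟩
  | n + 1, y, hy =>
    have ⟨hyΔ, hpn⟩ := hp n y hy
    ⟨hyΔ, hp.mem_pdsDom_succ h₀ hx₀ n _ hpn⟩

protected lemma tShift (hp : IsAntiOrbit α Δ p) {x₀ : X} (h₀ : p 0 = Sum.inl x₀)
    (hx₀ : x₀ ∈ Δ) : IsAntiOrbit α Δ (tShift α p)
  | 0, y, hy => by
    rw [tShift_succ, h₀] at hy
    obtain rfl := Sum.inl_injective hy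
    exact ⟨hx₀, by simp [h₀]⟩
  | n + 1, y, hy => hp n y hy

protected lemma bShift (hp : IsAntiOrbit α Δ p) : IsAntiOrbit α Δ (bShift p) :=
  fun n => hp (n + 1)

lemma tShift_bShift (hp : IsAntiOrbit α Δ p) {x₁ : X} (h₁ : p 1 = Sum.inl x₁) :
    tShift α (bShift p) = p := by
  funext n
  cases n with
  | zero => simp [h₁, (hp 0 x₁ h₁).2]
  | succ n => rfl

end IsAntiOrbit

lemma isAntiOrbit_of_mem_Xtilde (hp : p ∈ Xtilde α Δ) : IsAntiOrbit α Δ p := by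
  rcases hp with hp | hp
  · obtain ⟨N, -, -, hrec, -⟩ := mem_iUnion.1 hp
    exact hrec
  · exact hp.2

section Membership

variable {x₀ : X}

lemma tShift_mem_XN {N : ℕ} (hp : p ∈ XN α Δ N) (h₀ : p 0 = Sum.inl x₀) (hx₀ : x₀ ∈ Δ) :
    tShift α p ∈ XN α Δ (N + 1) := by
  obtain ⟨hdom, hzero, hrec, hlast⟩ := hp
  refine ⟨fun n hn => ?_, fun n hn => ?_, IsAntiOrbit.tShift hrec h₀ hx₀, hlast⟩
  · cases n with
    | zero => exact ⟨α x₀, by simp [h₀], mem_univ _⟩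
    | succ m =>
      obtain ⟨y, hy, -⟩ := hdom m (by omega)
      exact ⟨y, hy, IsAntiOrbit.mem_pdsDom_succ hrec h₀ hx₀ m y hy⟩
  · cases n with
    | zero => omega
    | succ m => exact hzero m (by omega)

lemma tShift_mem_XInf (hp : p ∈ XInf α Δ) (h₀ : p 0 = Sum.inl x₀) (hx₀ : x₀ ∈ Δ) :
    tShift α p ∈ XInf α Δ := by
  obtain ⟨hdom, hrec⟩ := hp
  refine ⟨fun n => ?_, IsAntiOrbit.tShift hrec h₀ hx₀⟩
  cases n with
  | zero => exact ⟨α x₀, by simp [h₀], mem_univ _⟩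
  | succ m =>
    obtain ⟨y, hy, -⟩ := hdom m
    exact ⟨y, hy, IsAntiOrbit.mem_pdsDom_succ hrec h₀ hx₀ m y hy⟩

lemma bShift_mem_XN {N : ℕ} (hp : p ∈ XN α Δ (N + 1)) : bShift p ∈ XN α Δ N := by
  obtain ⟨hdom, hzero, hrec, hlast⟩ := hp
  refine ⟨fun n hn => ?_, fun n hn => hzero (n + 1) (by omega), IsAntiOrbit.bShift hrec, hlast⟩
  obtain ⟨y, hy, hyd⟩ := hdom (n + 1) (by omega)
  exact ⟨y, hy, pdsDom_succ_subset α Δ n hyd⟩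

lemma bShift_mem_XInf (hp : p ∈ XInf α Δ) : bShift p ∈ XInf α Δ := by
  obtain ⟨hdom, hrec⟩ := hp
  refine ⟨fun n => ?_, IsAntiOrbit.bShift hrec⟩
  obtain ⟨y, hy, hyd⟩ := hdom (n + 1)
  exact ⟨y, hy, pdsDom_succ_subset α Δ n hyd⟩

lemma tShift_mem_tDeltaM1 (hp : p ∈ tDelta1 α Δ) : tShift α p ∈ tDeltaM1 α Δ := by
  obtain ⟨hpX, x₀, hx₀, h₀⟩ := hp
  refine ⟨?_, by simp [h₀]⟩
  rcases hpX with hN | hInf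
  · obtain ⟨N, hN⟩ := mem_iUnion.1 hN
    exact Or.inl (mem_iUnion.2 ⟨N + 1, tShift_mem_XN hN h₀ hx₀⟩)
  · exact Or.inr (tShift_mem_XInf hInf h₀ hx₀)

lemma exists_eq_inl_of_ne_pdsZero {a : X ⊕ Unit} (ha : a ≠ pdsZero X) : ∃ x, a = Sum.inl x := by
  cases a with
  | inl x => exact ⟨x, rfl⟩
  | inr u => exact absurd rfl ha

lemma bShift_mem_tDelta1 (hp : p ∈ tDeltaM1 α Δ) : bShift p ∈ tDelta1 α Δ := by
  obtain ⟨hpX, hp₁⟩ := hp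
  obtain ⟨x₁, h₁⟩ := exists_eq_inl_of_ne_pdsZero hp₁
  refine ⟨?_, x₁, ((isAntiOrbit_of_mem_Xtilde hpX) 0 x₁ h₁).1, h₁⟩
  rcases hpX with hN | hInf
  · obtain ⟨N, hN⟩ := mem_iUnion.1 hN
    cases N with
    | zero => exact absurd (hN.2.1 1 Nat.one_pos) hp₁
    | succ N => exact Or.inl (mem_iUnion.2 ⟨N, bShift_mem_XN hN⟩)
  · exact Or.inr (bShift_mem_XInf hInf)

lemma tShift_bShift_of_mem_tDeltaM1 (hp : p ∈ tDeltaM1 α Δ) : tShift α (bShift p) = p :=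
  have ⟨_, h₁⟩ := exists_eq_inl_of_ne_pdsZero hp.2
  (isAntiOrbit_of_mem_Xtilde hp.1).tShift_bShift h₁

end Membership

variable [TopologicalSpace X]

lemma continuousOn_tShift (hα : ContinuousOn α Δ) :
    ContinuousOn (tShift α) {p | ∃ x ∈ Δ, p 0 = Sum.inl x} := by
  refine continuousOn_pi.2 fun n => ?_
  cases n with
  | zero =>
    have hmap : ContinuousOn (Sum.map α id) (Sum.inl '' Δ : Set (X ⊕ Unit)) :=
      Topology.IsEmbedding.inl.isInducing.continuousOn_image_iff.2
        (continuous_inl.comp_continuousOn hα)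
    refine hmap.comp (continuous_apply 0).continuousOn ?_
    rintro p ⟨x, hx, h₀⟩
    exact ⟨x, hx, h₀.symm⟩
  | succ n => exact (continuous_apply n).continuousOn

lemma continuous_bShift : Continuous (bShift : (ℕ → X ⊕ Unit) → ℕ → X ⊕ Unit) :=
  continuous_pi fun n => continuous_apply (n + 1)

theorem tShift_partialHomeo_general {X : Type*} [TopologicalSpace X]
    (Δ : Set X) (α : X → X) (hα : ContinuousOn α Δ) :
    Set.BijOn (tShift α) (tDelta1 α Δ) (tDeltaM1 α Δ) ∧
    ContinuousOn (tShift α) (tDelta1 α Δ) ∧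
    ContinuousOn bShift (tDeltaM1 α Δ) ∧
    (∀ p ∈ tDelta1 α Δ, bShift (tShift α p) = p) ∧
    (∀ p ∈ tDeltaM1 α Δ, tShift α (bShift p) = p) ∧
    (∀ p ∈ tDelta1 α Δ, ∀ x, p 0 = Sum.inl x → tShift α p 0 = Sum.inl (α x)) := by
  have hinv : InvOn bShift (tShift α) (tDelta1 α Δ) (tDeltaM1 α Δ) :=
    ⟨fun p _ => bShift_tShift p, fun _ hp => tShift_bShift_of_mem_tDeltaM1 hp⟩
  refine ⟨hinv.bijOn (fun _ => tShift_mem_tDeltaM1) (fun _ => bShift_mem_tDelta1),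
    (continuousOn_tShift hα).mono fun _ hp => hp.2, continuous_bShift.continuousOn,
    hinv.1, hinv.2, fun p _ x h₀ => by simp [h₀]⟩

/-- If `Δ₋₁` is open, then `α̃(x₀, x₁, …) = (α x₀, x₀, x₁, …)` is a
homeomorphism of `Δ̃₁` onto `Δ̃₋₁`, with inverse the backwards shift,
and `Φ ∘ α̃ = α ∘ Φ` on `Δ̃₁`. -/
theorem tShift_partialHomeo {X : Type*} [TopologicalSpace X] [CompactSpace X]
    [T2Space X] (Δ : Set X) (hΔ : IsClopen Δ) (α : X → X) (hα : ContinuousOn α Δ)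
    (hopen : IsOpen (α '' Δ)) :
    Set.BijOn (tShift α) (tDelta1 α Δ) (tDeltaM1 α Δ) ∧
    ContinuousOn (tShift α) (tDelta1 α Δ) ∧
    ContinuousOn bShift (tDeltaM1 α Δ) ∧
    (∀ p ∈ tDelta1 α Δ, bShift (tShift α p) = p) ∧
    (∀ p ∈ tDeltaM1 α Δ, tShift α (bShift p) = p) ∧
    (∀ p ∈ tDelta1 α Δ, ∀ x, p 0 = Sum.inl x → tShift α p 0 = Sum.inl (α x)) :=
  tShift_partialHomeo_general Δ α hα
end

section
/- Let (X, α) be a partial dynamical system with α surjective (Δ₋₁ = X). Then the α-extension X̃ equals X_∞, and the system (X_∞, Φₙ)_{n∈ℕ} with Φₙ(x₀, x₁, ..., xₙ, ...) = xₙ is the projective (inverse) limit of the projective sequence (Δₙ, α|_{Δₙ})_{n∈ℕ}. -/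
open Set

variable {X : Type*}

universe u

/-- If `α` is surjective, then `X̃ = X_∞` and `(X_∞, Φₙ)` is the projective
limit of the projective sequence `(Δₙ, α|_{Δₙ})`: it satisfies the universal
property that every compatible family of continuous maps `fₙ : Z → Δₙ`
factors uniquely through `X_∞`. -/
theorem Xtilde_projectiveLimit {X : Type*} [TopologicalSpace X] [CompactSpace X]
    [T2Space X] (Δ : Set X) (hΔ : IsClopen Δ) (α : X → X) (hα : ContinuousOn α Δ)
    (hsurj : α '' Δ = Set.univ) :
    Xtilde α Δ = XInf α Δ ∧
    ∀ (Z : Type u) (_ : TopologicalSpace Z) (f : ℕ → Z → X),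
      (∀ n, Continuous (f n)) → (∀ n z, f n z ∈ pdsDom α Δ n) →
      (∀ n z, α (f (n + 1) z) = f n z) →
      ∃! g : Z → ℕ → X ⊕ Unit, Continuous g ∧ (∀ z, g z ∈ XInf α Δ) ∧
        ∀ n z, g z n = Sum.inl (f n z) := by
  constructor
  · apply Set.union_eq_self_of_subset_left
    intro p hp
    simp only [Set.mem_iUnion] at hp
    obtain ⟨N, h1, _, _, h4⟩ := hp
    obtain ⟨x, hx, hxd⟩ := h1 N le_rfl
    exact absurd (by rw [hsurj]; trivial) (h4 x hx)
  · intro Z _ f hcont hdom hcomp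
    refine ⟨fun z n => Sum.inl (f n z), ⟨?_, ?_, fun n z => rfl⟩, ?_⟩
    · exact continuous_pi fun n => continuous_inl.comp (hcont n)
    · intro z
      constructor
      · exact fun n => ⟨f n z, rfl, hdom n z⟩
      · intro n x hx
        have hx' : x = f (n + 1) z := (Sum.inl.inj hx).symm
        subst hx'
        exact ⟨(hdom (n + 1) z).1, by rw [hcomp n z]⟩
    · intro g' ⟨_, _, hg'⟩
      funext z n
      exact hg' n z
end

section
/- Let (X, α) be a partial dynamical system where X = {1, ..., N} is finite and discrete, and let A be the {0,1}-matrix with A(x,y) = 1 iff α(y) = x (the graph of α with reversed edges). Then α is topologically free if and only if every loop in the directed graph Gr(A) has an exit. -/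
open Set

variable {X : Type*}

lemma iterate_mem_pdsDom {X : Type*} (α : X → X) (Δ : Set X) :
    ∀ (j m : ℕ) (x : X), x ∈ pdsDom α Δ (m + j) → α^[j] x ∈ pdsDom α Δ m := by
  intro j
  induction j with
  | zero => intro m x h; simpa using h
  | succ j ih =>
    intro m x h
    rw [Function.iterate_succ_apply]
    have h' : x ∈ pdsDom α Δ (m + j + 1) := by
      have e : m + (j + 1) = m + j + 1 := by ring
      rwa [e] at h
    exact ih m (α x) h'.2

/-- For a partial map `α : Δ → X` of a finite discrete space `X`, with `A` the
adjacency matrix `A(x,y) = 1 ↔ (y ∈ Δ ∧ α y = x)`, the map `α` is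
topologically free iff every loop in the directed graph `Gr(A)` has an exit. -/
theorem topFree_iff_loops_have_exit {X : Type*} [TopologicalSpace X]
    [DiscreteTopology X] [Fintype X] (Δ : Set X) (α : X → X) :
    TopFree α Δ ↔
    ∀ (n : ℕ) (c : ZMod (n + 1) → X),
      (∀ i, c (i + 1) ∈ Δ ∧ α (c (i + 1)) = c i) →
      ∃ i, ∃ y ∈ Δ, α y = c i ∧ y ≠ c (i + 1) := by
  constructor
  · -- topologically free → every loop has an exit
    intro htf n c hc
    by_contra hex
    push_neg at hex
    have hcD : ∀ i, c i ∈ Δ := by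
      intro i
      have h := (hc (i - 1)).1
      rwa [sub_add_cancel] at h
    have hstep : ∀ i, α (c i) = c (i - 1) := by
      intro i
      have h := (hc (i - 1)).2
      rwa [sub_add_cancel] at h
    have hdom : ∀ (m : ℕ) (i : ZMod (n + 1)), c i ∈ pdsDom α Δ m := by
      intro m
      induction m with
      | zero => intro i; trivial
      | succ m ih =>
        intro i
        refine ⟨hcD i, ?_⟩
        show α (c i) ∈ pdsDom α Δ m
        rw [hstep i]; exact ih _
    have hiter : ∀ (m : ℕ) (i : ZMod (n + 1)), α^[m] (c i) = c (i - m) := by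
      intro m
      induction m with
      | zero => intro i; simp
      | succ m ih =>
        intro i
        rw [Function.iterate_succ_apply', ih, hstep]
        congr 1
        push_cast
        ring
    have hfix : c 0 ∈ pdsFix α Δ (n + 1) := by
      refine ⟨hdom _ _, ?_⟩
      rw [hiter]
      congr 1
      simp
    obtain ⟨x, ⟨hxW, -⟩, k, hk1, hkn, y, z, hy, hz, hay, haz, hyz⟩ :=
      htf (n + 1) (Nat.succ_pos n) {c 0} (isOpen_discrete _) ⟨c 0, rfl, hfix⟩
    have hx0 : x = c 0 := hxW
    have huniq : ∀ (k : ℕ) (i : ZMod (n + 1)) (w : X),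
        w ∈ pdsDom α Δ k → α^[k] w = c i → w = c (i + k) := by
      intro k
      induction k with
      | zero =>
        intro i w _ hw
        simp only [Function.iterate_zero, id] at hw
        rw [hw]; congr 1; push_cast; ring
      | succ k ih =>
        intro i w hw hit
        rw [Function.iterate_succ_apply] at hit
        have haw : α w = c (i + k) := ih i (α w) hw.2 hit
        have := hex (i + k) w hw.1 haw
        rw [this]; congr 1; push_cast; ring
    have hy' : y = c (0 + k) := huniq k 0 y hy (hay.trans hx0)
    have hz' : z = c (0 + k) := huniq k 0 z hz (haz.trans hx0)
    exact hyz (hy'.trans hz'.symm)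
  · -- every loop has an exit → topologically free
    intro hloop n hn W _hW hWne
    obtain ⟨x, hxW, hxfix⟩ := hWne
    obtain ⟨m, rfl⟩ : ∃ m, n = m + 1 := ⟨n - 1, (Nat.succ_pred_eq_of_pos hn).symm⟩
    have hxdom : x ∈ pdsDom α Δ (m + 1) := hxfix.1
    have hxper : α^[m + 1] x = x := hxfix.2
    have hsub : ∀ j, j ≤ m + 1 → α^[j] x ∈ pdsDom α Δ (m + 1 - j) := by
      intro j hj
      have e : (m + 1 - j) + j = m + 1 := Nat.sub_add_cancel hj
      exact iterate_mem_pdsDom α Δ j (m + 1 - j) x (by rw [e]; exact hxdom)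
    set c : ZMod (m + 1) → X := fun i => α^[m + 1 - i.val] x with hcdef
    have hc : ∀ i : ZMod (m + 1), c (i + 1) ∈ Δ ∧ α (c (i + 1)) = c i := by
      intro i
      have hival : i.val < m + 1 := ZMod.val_lt i
      by_cases him : i.val = m
      · have h0 : ((i.val : ℕ) : ZMod (m + 1)) = i := ZMod.natCast_rightInverse i
        have hi : i = (m : ZMod (m + 1)) := by rw [← h0, him]
        have hi1 : i + 1 = 0 := by
          rw [hi, show ((m : ZMod (m + 1)) + 1) = ((m + 1 : ℕ) : ZMod (m + 1)) by
            push_cast; ring, ZMod.natCast_self]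
        have hc0 : c (i + 1) = x := by
          rw [hi1]
          show α^[m + 1 - (0 : ZMod (m+1)).val] x = x
          rw [ZMod.val_zero, Nat.sub_zero, hxper]
        constructor
        · rw [hc0]; exact hxdom.1
        · rw [hc0]
          show α x = α^[m + 1 - i.val] x
          rw [him, Nat.add_sub_cancel_left]
          simp
      · have hlt : i.val < m := lt_of_le_of_ne (Nat.lt_succ_iff.mp hival) him
        have hone : (1 : ZMod (m + 1)).val = 1 := by
          rw [ZMod.val_one_eq_one_mod]; exact Nat.mod_eq_of_lt (by omega)
        have hval : (i + 1 : ZMod (m + 1)).val = i.val + 1 := by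
          rw [ZMod.val_add, hone]; exact Nat.mod_eq_of_lt (by omega)
        constructor
        · show α^[m + 1 - (i + 1).val] x ∈ Δ
          rw [hval]
          have h1 := hsub (m + 1 - (i.val + 1)) (by omega)
          have h2 : m + 1 - (m + 1 - (i.val + 1)) = i.val + 1 := by omega
          rw [h2] at h1
          exact h1.1
        · show α (α^[m + 1 - (i + 1).val] x) = α^[m + 1 - i.val] x
          rw [hval]
          have e : m + 1 - i.val = (m + 1 - (i.val + 1)) + 1 := by omega
          rw [e, Function.iterate_succ_apply']
    obtain ⟨i, y, hyD, hay, hne⟩ := hloop m c hc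
    have hival : i.val < m + 1 := ZMod.val_lt i
    have hci : c i ∈ pdsDom α Δ i.val := by
      have h1 := hsub (m + 1 - i.val) (by omega)
      have h2 : m + 1 - (m + 1 - i.val) = i.val := by omega
      rw [h2] at h1
      exact h1
    have hiterx : ∀ w : X, α w = c i → α^[i.val + 1] w = x := by
      intro w hw
      rw [Function.iterate_succ_apply, hw]
      show α^[i.val] (α^[m + 1 - i.val] x) = x
      rw [← Function.iterate_add_apply]
      have e : i.val + (m + 1 - i.val) = m + 1 := by omega
      rw [e, hxper]
    refine ⟨x, ⟨hxW, hxfix⟩, i.val + 1, le_add_self, by omega,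
      y, c (i + 1), ⟨hyD, ?_⟩, ⟨(hc i).1, ?_⟩, hiterx y hay, hiterx _ (hc i).2, hne⟩
    · show α y ∈ pdsDom α Δ i.val
      rw [hay]; exact hci
    · show α (c (i + 1)) ∈ pdsDom α Δ i.val
      rw [(hc i).2]; exact hci
end
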